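/- For any compositions β, γ and α: (1) β*∘γ ∼ β∘γ; (2) β∘γ* ∼ β∘γ; and (3) β∘α*∘γ ∼ β∘α∘γ. -/

import Mathlib

/-!
View `M(β)` as an element of the monoid algebra `ℕ[partitions]`. A coarsening of `u · v` either
keeps the cut between `u` and `v` or merges across it, so `M(u · v) = M(u) M(v) + M(u ⊙ v)`,
and this product is commutative. The map `β ↦ β ∘ γ` preserves both `·` and `⊙`; splitting off
the first part `a` of `β = a b β'` and applying the identity to `β ∘ γ` and to `β* ∘ γ` reduces
(1) to the shorter compositions `b β'` and `(a + b) β'`. The case `γ = 1` gives `M(β*) = M(β)`,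
hence (2) from `(β ∘ γ)* = β* ∘ γ*`, and (3) follows from (2) and the associativity of `∘`.
-/

/-- The size `|β|` of a composition, i.e. the sum of its components. -/
def size (l : List ℕ+) : ℕ := (l.map fun x => (x : ℕ)).sum

/-- Near concatenation `α ⊙ β` of two (nonempty) compositions. -/
def odot (a b : List ℕ+) : List ℕ+ :=
  if a = [] then b
  else if b = [] then a
  else a.dropLast ++ (a.getLastI + b.headI) :: b.tail

/-- `β^{⊙ m}`, the `m`-fold near concatenation of `β` with itself. -/
def odotPow (b : List ℕ+) : ℕ → List ℕ+
  | 0 => []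
  | n + 1 => odot (odotPow b n) b

/-- The composition operation `α ∘ β = β^{⊙α₁} · β^{⊙α₂} ⋯ β^{⊙αₖ}`. -/
def compOp (a b : List ℕ+) : List ℕ+ := (a.map fun ai => odotPow b (ai : ℕ)).flatten

/-- `β₁ ∘ β₂ ∘ ⋯ ∘ βₖ` (the composition `1` is a two-sided identity for `∘`). -/
def compFold (l : List (List ℕ+)) : List ℕ+ := l.foldr compOp [1]

/-- The list of all coarsenings of a composition. -/
def coarsenings : List ℕ+ → List (List ℕ+)
  | [] => [[]]
  | [a] => [[a]]
  | a :: b :: t => ((coarsenings (b :: t)).map (a :: ·)) ++ coarsenings ((a + b) :: t)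
  termination_by l => l.length

/-- The multiset `M(β)` of partitions (as multisets of parts) of all coarsenings of `β`. -/
def Mset (b : List ℕ+) : Multiset (Multiset ℕ+) :=
  ↑((coarsenings b).map fun l => (l : Multiset ℕ+))

@[simp] lemma odot_nil_left (b : List ℕ+) : odot [] b = b := by simp [odot]

@[simp] lemma odot_nil_right (a : List ℕ+) : odot a [] = a := by
  unfold odot; split <;> simp_all

lemma odot_concat_cons (u : List ℕ+) (x y : ℕ+) (v : List ℕ+) :
    odot (u ++ [x]) (y :: v) = u ++ (x + y) :: v := by
  simp [odot, List.getLastI_eq_getLast?_getD]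

@[simp] lemma odot_singleton_cons (x y : ℕ+) (v : List ℕ+) : odot [x] (y :: v) = (x + y) :: v :=
  odot_concat_cons [] x y v

lemma odot_ne_nil (u : List ℕ+) {v : List ℕ+} (hv : v ≠ []) : odot u v ≠ [] := by
  rcases List.eq_nil_or_concat' u with rfl | ⟨u, x, rfl⟩
  · simpa using hv
  · obtain ⟨y, v, rfl⟩ := List.exists_cons_of_ne_nil hv
    simp [odot_concat_cons]

lemma odot_append_right (u : List ℕ+) {v : List ℕ+} (hv : v ≠ []) (w : List ℕ+) :
    odot u (v ++ w) = odot u v ++ w := by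
  rcases List.eq_nil_or_concat' u with rfl | ⟨u, x, rfl⟩
  · simp
  · obtain ⟨y, v, rfl⟩ := List.exists_cons_of_ne_nil hv
    simp [odot_concat_cons]

lemma odot_append_left (u : List ℕ+) {v : List ℕ+} (hv : v ≠ []) (w : List ℕ+) :
    odot (u ++ v) w = u ++ odot v w := by
  rcases w with _ | ⟨z, w⟩
  · simp
  · obtain ⟨v, y, rfl⟩ := (List.eq_nil_or_concat' v).resolve_left hv
    simp [← List.append_assoc, odot_concat_cons]

lemma odot_cons (x : ℕ+) {u : List ℕ+} (hu : u ≠ []) (v : List ℕ+) :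
    odot (x :: u) v = x :: odot u v :=
  odot_append_left [x] hu v

lemma odot_assoc (u v w : List ℕ+) : odot (odot u v) w = odot u (odot v w) := by
  rcases v with _ | ⟨y, v⟩
  · simp
  rcases eq_or_ne v [] with rfl | hv
  · rcases List.eq_nil_or_concat' u with rfl | ⟨u, x, rfl⟩
    · simp
    rcases w with _ | ⟨z, w⟩
    · simp
    simp [odot_concat_cons, add_assoc]
  · rw [← List.singleton_append, odot_append_right _ (List.cons_ne_nil y []),
      odot_append_left _ hv, odot_append_left _ hv, odot_append_right _ (List.cons_ne_nil y [])]

lemma odot_reverse (u v : List ℕ+) : (odot u v).reverse = odot v.reverse u.reverse := by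
  rcases List.eq_nil_or_concat' u with rfl | ⟨u, x, rfl⟩
  · simp
  rcases v with _ | ⟨y, v⟩
  · simp
  simp [odot_concat_cons, add_comm]

lemma odotPow_add (b : List ℕ+) (m n : ℕ) :
    odotPow b (m + n) = odot (odotPow b m) (odotPow b n) := by
  induction n with
  | zero => simp [odotPow]
  | succ n ih => rw [← add_assoc, odotPow, ih, odot_assoc, ← odotPow]

lemma odotPow_succ' (b : List ℕ+) (n : ℕ) : odotPow b (n + 1) = odot b (odotPow b n) := by
  rw [add_comm, odotPow_add]
  simp [odotPow]

lemma odotPow_ne_nil {b : List ℕ+} (hb : b ≠ []) {n : ℕ} (hn : n ≠ 0) : odotPow b n ≠ [] := by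
  obtain ⟨n, rfl⟩ := Nat.exists_eq_succ_of_ne_zero hn
  exact odot_ne_nil _ hb

@[simp] lemma odotPow_nil (n : ℕ) : odotPow [] n = [] := by
  induction n with
  | zero => rfl
  | succ n ih => simp [odotPow, ih]

lemma odotPow_singleton_one (a : ℕ+) : odotPow [1] a = [a] := by
  induction a using PNat.recOn with
  | one => rfl
  | succ a ih => rw [PNat.add_coe, PNat.one_coe, odotPow, ih, odot_singleton_cons]

lemma odotPow_reverse (b : List ℕ+) (n : ℕ) : (odotPow b n).reverse = odotPow b.reverse n := by
  induction n with
  | zero => rfl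
  | succ n ih => rw [odotPow, odot_reverse, ih, odotPow_succ']

lemma compOp_cons (a : ℕ+) (u b : List ℕ+) : compOp (a :: u) b = odotPow b a ++ compOp u b := rfl

lemma compOp_singleton (a : ℕ+) (b : List ℕ+) : compOp [a] b = odotPow b a := by
  simp [compOp]

lemma compOp_append (u v b : List ℕ+) : compOp (u ++ v) b = compOp u b ++ compOp v b := by
  simp [compOp]

@[simp] lemma compOp_nil_right (u : List ℕ+) : compOp u [] = [] := by
  simp [compOp]

@[simp] lemma compOp_one_right (u : List ℕ+) : compOp u [1] = u := by
  induction u with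
  | nil => rfl
  | cons a u ih => rw [compOp_cons, odotPow_singleton_one, ih, List.singleton_append]

lemma compOp_ne_nil {u b : List ℕ+} (hu : u ≠ []) (hb : b ≠ []) : compOp u b ≠ [] := by
  obtain ⟨a, u, rfl⟩ := List.exists_cons_of_ne_nil hu
  simp [compOp_cons, odotPow_ne_nil hb a.ne_zero]

lemma compOp_reverse (u b : List ℕ+) : (compOp u b).reverse = compOp u.reverse b.reverse := by
  induction u with
  | nil => rfl
  | cons a u ih =>
    rw [compOp_cons, List.reverse_append, ih, List.reverse_cons, compOp_append,
      compOp_singleton, odotPow_reverse]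

lemma compOp_odot (u v c : List ℕ+) : compOp (odot u v) c = odot (compOp u c) (compOp v c) := by
  rcases eq_or_ne c [] with rfl | hc
  · simp
  rcases List.eq_nil_or_concat' u with rfl | ⟨u, x, rfl⟩
  · simp [compOp]
  rcases v with _ | ⟨y, v⟩
  · simp [compOp]
  rw [odot_concat_cons, compOp_append, compOp_append, compOp_singleton, compOp_cons, compOp_cons,
    odot_append_left _ (odotPow_ne_nil hc x.ne_zero),
    odot_append_right _ (odotPow_ne_nil hc y.ne_zero), PNat.add_coe, odotPow_add]

lemma compOp_odotPow (b c : List ℕ+) (n : ℕ) :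
    compOp (odotPow b n) c = odotPow (compOp b c) n := by
  induction n with
  | zero => rfl
  | succ n ih => rw [odotPow, compOp_odot, ih, odotPow]

lemma compOp_assoc (a b c : List ℕ+) : compOp (compOp a b) c = compOp a (compOp b c) := by
  induction a with
  | nil => rfl
  | cons x a ih => rw [compOp_cons, compOp_append, compOp_cons, ih, compOp_odotPow]

/-- The product in the monoid algebra `ℕ[partitions]`, partitions being multiplied by union. -/
def pairSums (A B : Multiset (Multiset ℕ+)) : Multiset (Multiset ℕ+) :=
  A.bind fun a => B.map (a + ·)

lemma pairSums_comm (A B : Multiset (Multiset ℕ+)) : pairSums A B = pairSums B A := by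
  simp only [pairSums, ← Multiset.bind_singleton]
  rw [Multiset.bind_bind]
  simp [add_comm]

lemma pairSums_add_left (A B C : Multiset (Multiset ℕ+)) :
    pairSums (A + B) C = pairSums A C + pairSums B C :=
  Multiset.add_bind _ _ _

lemma pairSums_map_cons (a : ℕ+) (A B : Multiset (Multiset ℕ+)) :
    pairSums (A.map (a ::ₘ ·)) B = (pairSums A B).map (a ::ₘ ·) := by
  simp [pairSums, Multiset.bind_map, Multiset.map_bind, Multiset.map_map,
    Multiset.cons_add]

lemma pairSums_singleton_left (a : Multiset ℕ+) (B : Multiset (Multiset ℕ+)) :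
    pairSums {a} B = B.map (a + ·) := by
  simp [pairSums]

lemma Mset_eq_coe (b : List ℕ+) : Mset b = ((coarsenings b).map ((↑) : List ℕ+ → Multiset ℕ+)) := by
  simp only [Mset, List.map_id']
  exact congrArg _ (List.flatMap_pure_eq_map _ _)

lemma Mset_singleton (a : ℕ+) : Mset [a] = {{a}} := by
  simp [Mset_eq_coe, coarsenings]

lemma Mset_cons (a : ℕ+) {u : List ℕ+} (hu : u ≠ []) :
    Mset (a :: u) = (Mset u).map (a ::ₘ ·) + Mset (odot [a] u) := by
  obtain ⟨b, u, rfl⟩ := List.exists_cons_of_ne_nil hu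
  simp [Mset_eq_coe, coarsenings, Function.comp_def]

theorem Mset_append : ∀ {u v : List ℕ+}, u ≠ [] → v ≠ [] →
    Mset (u ++ v) = pairSums (Mset u) (Mset v) + Mset (odot u v)
  | [a], v, _, hv => by
    rw [List.singleton_append, Mset_cons a hv, Mset_singleton, pairSums_singleton_left]
    rfl
  | a :: b :: u, v, _, hv => by
    have hbu : b :: u ≠ [] := List.cons_ne_nil b u
    rw [List.cons_append, Mset_cons a (List.append_ne_nil_of_left_ne_nil hbu v),
      odot_append_right _ hbu, odot_singleton_cons, Mset_append hbu hv,
      Mset_append (List.cons_ne_nil _ u) hv, Mset_cons a hbu, odot_singleton_cons,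
      odot_cons a hbu, Mset_cons a (odot_ne_nil _ hv), ← odot_assoc, odot_singleton_cons,
      pairSums_add_left, pairSums_map_cons, Multiset.map_add]
    abel
termination_by u => u.length

theorem Mset_compOp_reverse_left_of_ne_nil {γ : List ℕ+} (hγ : γ ≠ []) :
    ∀ β : List ℕ+, Mset (compOp β.reverse γ) = Mset (compOp β γ)
  | [] | [_] => rfl
  | a :: b :: β => by
    have hne : ∀ {u : List ℕ+}, u ≠ [] → compOp u γ ≠ [] := fun hu => compOp_ne_nil hu hγ
    have hmerge : odot (b :: β).reverse [a] = ((a + b) :: β).reverse := by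
      rw [← odot_singleton_cons, odot_reverse, List.reverse_singleton]
    have hrev : Mset (compOp (a :: b :: β).reverse γ) = pairSums (Mset (compOp (b :: β) γ))
        (Mset (compOp [a] γ)) + Mset (compOp ((a + b) :: β) γ) := by
      rw [List.reverse_cons, compOp_append, Mset_append (hne (by simp)) (hne (by simp)),
        ← compOp_odot, hmerge, Mset_compOp_reverse_left_of_ne_nil hγ (b :: β),
        Mset_compOp_reverse_left_of_ne_nil hγ ((a + b) :: β)]
    have hfwd : Mset (compOp (a :: b :: β) γ) = pairSums (Mset (compOp [a] γ))
        (Mset (compOp (b :: β) γ)) + Mset (compOp ((a + b) :: β) γ) := by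
      rw [← odot_singleton_cons, compOp_odot, ← Mset_append (hne (by simp)) (hne (by simp)),
        ← compOp_append, List.singleton_append]
    rw [hrev, hfwd, pairSums_comm]
termination_by β => β.length

theorem Mset_compOp_reverse_left (β γ : List ℕ+) :
    Mset (compOp β.reverse γ) = Mset (compOp β γ) := by
  rcases eq_or_ne γ [] with rfl | hγ
  · simp
  · exact Mset_compOp_reverse_left_of_ne_nil hγ β

theorem Mset_reverse (β : List ℕ+) : Mset β.reverse = Mset β := by
  simpa using Mset_compOp_reverse_left β [1]

theorem Mset_compOp_reverse_right (β γ : List ℕ+) :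
    Mset (compOp β γ.reverse) = Mset (compOp β γ) := by
  rw [← Mset_reverse, compOp_reverse, List.reverse_reverse, Mset_compOp_reverse_left]

theorem reverse_factor_equiv_general (β γ α : List ℕ+) :
    Mset (compOp β.reverse γ) = Mset (compOp β γ) ∧
    Mset (compOp β γ.reverse) = Mset (compOp β γ) ∧
    Mset (compOp β (compOp α.reverse γ)) = Mset (compOp β (compOp α γ)) := by
  refine ⟨Mset_compOp_reverse_left β γ, Mset_compOp_reverse_right β γ, ?_⟩
  calc Mset (compOp β (compOp α.reverse γ))
      = Mset (compOp β (compOp α γ.reverse).reverse) := by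
        rw [compOp_reverse, List.reverse_reverse]
    _ = Mset (compOp (compOp β α) γ.reverse) := by
        rw [Mset_compOp_reverse_right, compOp_assoc]
    _ = Mset (compOp β (compOp α γ)) := by
        rw [Mset_compOp_reverse_right, compOp_assoc]

/-- For any compositions `β`, `γ`, `α`:
(1) `β*∘γ ∼ β∘γ`; (2) `β∘γ* ∼ β∘γ`; (3) `β∘α*∘γ ∼ β∘α∘γ`. -/
theorem reverse_factor_equiv (β γ α : List ℕ+) (hβ : β ≠ []) (hγ : γ ≠ []) (hα : α ≠ []) :
    Mset (compOp β.reverse γ) = Mset (compOp β γ) ∧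
    Mset (compOp β γ.reverse) = Mset (compOp β γ) ∧
    Mset (compOp β (compOp α.reverse γ)) = Mset (compOp β (compOp α γ)) :=
  reverse_factor_equiv_general β γ α
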